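/- arXiv:2503.02155 — 4 statements merged into one kernel-verified Lean document; each statement's English description precedes it below -/
import Mathlib

section
/- Let f : ℝ^d → ℝ be C² with ‖∇²f(w)‖ ≤ L for all w, and let (α_m) be nonnegative step sizes with L·α_m ≤ 1/2 for all m. If (w_m) satisfies the gradient descent iteration w_{m+1} = w_m − α_m∇f(w_m), with ∇f(w_1) ≠ 0 and |∇f(w_m)| → 0 as m → ∞, then ∑_{m=1}^∞ α_m = ∞. In other words, divergence of the step-size series is necessary for convergence of the gradient to zero from noncritical initial data. -/
open Filter

lemma exp_aux (x : ℝ) (h0 : 0 ≤ x) (h1 : x ≤ 1/2) : Real.exp (-(2*x)) ≤ 1 - x := by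
  have hm : Real.exp (-(2*x)) * Real.exp (2*x) = 1 := by
    rw [← Real.exp_add]; norm_num
  nlinarith [Real.add_one_le_exp (2*x), Real.exp_pos (-(2*x))]

/-- necessity of `∑ α_m = ∞`. `f : ℝ^d → ℝ` is `C²` with uniform Hessian
bound `L`, steps `α_m ≥ 0` with `L·α_m ≤ 1/2`, iteration `w_{m+1} = w_m − α_m∇f(w_m)`
(indexed from `0`, so `w 0` is the initial iterate). If `∇f(w_0) ≠ 0` and
`‖∇f(w_m)‖ → 0`, then the partial sums of the `α_m` tend to infinity. -/
theorem stmt3 {d : ℕ} (f : EuclideanSpace ℝ (Fin d) → ℝ) (L : ℝ)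
    (hf : ContDiff ℝ 2 f)
    (hHess : ∀ w, ‖fderiv ℝ (gradient f) w‖ ≤ L)
    (α : ℕ → ℝ) (hα : ∀ m, 0 ≤ α m) (hαL : ∀ m, L * α m ≤ 1 / 2)
    (w : ℕ → EuclideanSpace ℝ (Fin d))
    (hiter : ∀ m, w (m + 1) = w m - α m • gradient f (w m))
    (hinit : gradient f (w 0) ≠ 0)
    (hconv : Tendsto (fun m => ‖gradient f (w m)‖) atTop (nhds 0)) :
    Tendsto (fun M => ∑ m ∈ Finset.range M, α m) atTop atTop := by
  set g : ℕ → EuclideanSpace ℝ (Fin d) := fun m => gradient f (w m) with hgdef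
  have hL0 : 0 ≤ L := le_trans (norm_nonneg _) (hHess (w 0))
  have hdiff : Differentiable ℝ (gradient f) := by
    have h1 : Differentiable ℝ (fderiv ℝ f) :=
      (hf.fderiv_right (m := 1) (by norm_num)).differentiable (by norm_num)
    have h2 : gradient f = fun x => (InnerProductSpace.toDual ℝ _).symm (fderiv ℝ f x) := rfl
    rw [h2]
    exact (InnerProductSpace.toDual ℝ _).symm.toContinuousLinearEquiv.differentiable.comp h1
  have hLip : ∀ x y : EuclideanSpace ℝ (Fin d),
      ‖gradient f y - gradient f x‖ ≤ L * ‖y - x‖ := fun x y =>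
    Convex.norm_image_sub_le_of_norm_fderiv_le (fun z _ => (hdiff z))
      (fun z _ => hHess z) convex_univ (Set.mem_univ x) (Set.mem_univ y)
  have hstep : ∀ m, Real.exp (-(2*L) * α m) * ‖g m‖ ≤ ‖g (m+1)‖ := by
    intro m
    have h1 : ‖g (m+1) - g m‖ ≤ L * α m * ‖g m‖ := by
      calc ‖g (m+1) - g m‖ ≤ L * ‖w (m+1) - w m‖ := hLip (w m) (w (m+1))
        _ = L * α m * ‖g m‖ := by
            rw [hiter m]
            rw [show w m - α m • gradient f (w m) - w m = -(α m • g m) by abel_nf; rfl]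
            rw [norm_neg, norm_smul, Real.norm_eq_abs, abs_of_nonneg (hα m)]
            ring
    have h2 : Real.exp (-(2*(L * α m))) ≤ 1 - L * α m :=
      exp_aux _ (mul_nonneg hL0 (hα m)) (hαL m)
    have h3 : ‖g m‖ - ‖g (m+1)‖ ≤ L * α m * ‖g m‖ :=
      le_trans (by simpa using norm_sub_norm_le (g m) (g (m+1))) (by rwa [norm_sub_rev] at h1)
    have h4 : (1 - L * α m) * ‖g m‖ ≤ ‖g (m+1)‖ := by nlinarith
    calc Real.exp (-(2*L) * α m) * ‖g m‖
        = Real.exp (-(2*(L * α m))) * ‖g m‖ := by ring_nf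
      _ ≤ (1 - L * α m) * ‖g m‖ := by
          exact mul_le_mul_of_nonneg_right h2 (norm_nonneg _)
      _ ≤ ‖g (m+1)‖ := h4
  have hlow : ∀ M, Real.exp (-(2*L) * ∑ m ∈ Finset.range M, α m) * ‖g 0‖ ≤ ‖g M‖ := by
    intro M
    induction M with
    | zero => simp
    | succ M ih =>
        have : Real.exp (-(2*L) * ∑ m ∈ Finset.range (M+1), α m) * ‖g 0‖
            = Real.exp (-(2*L) * α M) * (Real.exp (-(2*L) * ∑ m ∈ Finset.range M, α m) * ‖g 0‖) := by
          rw [Finset.sum_range_succ, mul_add, Real.exp_add]; ring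
        rw [this]
        calc Real.exp (-(2*L) * α M) * (Real.exp (-(2*L) * ∑ m ∈ Finset.range M, α m) * ‖g 0‖)
            ≤ Real.exp (-(2*L) * α M) * ‖g M‖ :=
              mul_le_mul_of_nonneg_left ih (Real.exp_pos _).le
          _ ≤ ‖g (M+1)‖ := hstep M
  have hmono : Monotone fun M => ∑ m ∈ Finset.range M, α m := by
    intro a b hab
    exact Finset.sum_le_sum_of_subset_of_nonneg (Finset.range_subset_range.mpr hab)
      (fun i _ _ => hα i)
  by_cases hbdd : BddAbove (Set.range fun M => ∑ m ∈ Finset.range M, α m)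
  · exfalso
    obtain ⟨B, hB⟩ := hbdd
    have hBle : ∀ M, ∑ m ∈ Finset.range M, α m ≤ B := fun M => hB (Set.mem_range_self M)
    have hg0 : 0 < ‖g 0‖ := norm_pos_iff.mpr hinit
    set ε := Real.exp (-(2*L) * B) * ‖g 0‖ with hε
    have hεpos : 0 < ε := mul_pos (Real.exp_pos _) hg0
    have hεle : ∀ M, ε ≤ ‖g M‖ := by
      intro M
      refine le_trans ?_ (hlow M)
      apply mul_le_mul_of_nonneg_right _ hg0.le
      apply Real.exp_le_exp.mpr
      have := hBle M
      nlinarith [hBle M]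
    rw [Metric.tendsto_atTop] at hconv
    obtain ⟨N, hN⟩ := hconv ε hεpos
    have := hN N le_rfl
    rw [Real.dist_eq, sub_zero, abs_of_nonneg (norm_nonneg _)] at this
    exact absurd this (not_lt.mpr (hεle N))
  · exact tendsto_atTop_atTop_of_monotone' hmono hbdd
end

section
/- Let f : ℝ^d → ℝ be a nonnegative C² function with ‖∇²f(w)‖ ≤ L for all w, which is coercive (f(w) → ∞ as |w| → ∞), and let (α_m) be nonincreasing step sizes with 0 ≤ α_m ≤ 1/L and ∑_{m=1}^∞ α_m = ∞. Then any sequence (w_m) satisfying w_{m+1} = w_m − α_m∇f(w_m) converges to the critical set 𝓒 := {w : ∇f(w) = 0}, i.e., dist(w_m, 𝓒) → 0 as m → ∞. -/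
open Filter Set
open scoped RealInnerProductSpace

section Aux

variable {E : Type*} [NormedAddCommGroup E] [InnerProductSpace ℝ E] [CompleteSpace E]

lemma grad_apply' {f : E → ℝ} (p v : E) :
    fderiv ℝ f p v = ⟪gradient f p, v⟫ := by
  rw [gradient, ← InnerProductSpace.toDual_apply_apply,
    (InnerProductSpace.toDual ℝ E).apply_symm_apply (fderiv ℝ f p)]

lemma descent' {f : E → ℝ} (hf : ContDiff ℝ 2 f) {L : ℝ}
    (hlip : ∀ x y : E, ‖gradient f x - gradient f y‖ ≤ L * ‖x - y‖) (x v : E) :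
    f (x + v) ≤ f x + ⟪gradient f x, v⟫ + L / 2 * ‖v‖ ^ 2 := by
  have hdf : Differentiable ℝ f := hf.differentiable (by norm_num)
  set φ : ℝ → ℝ := fun t => f (x + t • v) - t * ⟪gradient f x, v⟫ - L / 2 * t ^ 2 * ‖v‖ ^ 2
    with hφ
  have hder : ∀ t : ℝ, HasDerivAt φ
      (⟪gradient f (x + t • v), v⟫ - ⟪gradient f x, v⟫ - L * t * ‖v‖ ^ 2) t := by
    intro t
    have h1 : HasDerivAt (fun t : ℝ => x + t • v) v t := by
      simpa using ((hasDerivAt_id t).smul_const v).const_add x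
    have h2 : HasDerivAt (fun t : ℝ => f (x + t • v)) (fderiv ℝ f (x + t • v) v) t :=
      (hdf (x + t • v)).hasFDerivAt.comp_hasDerivAt t h1
    rw [grad_apply'] at h2
    have h3 : HasDerivAt (fun t : ℝ => t * ⟪gradient f x, v⟫) ⟪gradient f x, v⟫ t := by
      simpa using (hasDerivAt_id t).mul_const ⟪gradient f x, v⟫
    have h4 : HasDerivAt (fun t : ℝ => L / 2 * t ^ 2 * ‖v‖ ^ 2) (L * t * ‖v‖ ^ 2) t := by
      have := ((hasDerivAt_pow 2 t).const_mul (L / 2)).mul_const (‖v‖ ^ 2)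
      refine this.congr_deriv ?_
      ring
    exact (h2.sub h3).sub h4
  have hmono : AntitoneOn φ (Icc (0:ℝ) 1) := by
    apply antitoneOn_of_deriv_nonpos (convex_Icc 0 1)
    · exact (fun t _ => ((hder t).differentiableAt).continuousAt.continuousWithinAt)
    · exact fun t _ => ((hder t).differentiableAt).differentiableWithinAt
    · intro t ht
      rw [interior_Icc] at ht
      rw [(hder t).deriv]
      have hcs : ⟪gradient f (x + t • v) - gradient f x, v⟫ ≤
          ‖gradient f (x + t • v) - gradient f x‖ * ‖v‖ :=
        real_inner_le_norm _ _
      have hl : ‖gradient f (x + t • v) - gradient f x‖ ≤ L * (t * ‖v‖) := by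
        have := hlip (x + t • v) x
        simpa [norm_smul, abs_of_nonneg ht.1.le] using this
      have : ⟪gradient f (x + t • v), v⟫ - ⟪gradient f x, v⟫ ≤ L * t * ‖v‖ ^ 2 := by
        rw [← inner_sub_left]
        calc ⟪gradient f (x + t • v) - gradient f x, v⟫
            ≤ ‖gradient f (x + t • v) - gradient f x‖ * ‖v‖ := hcs
          _ ≤ L * (t * ‖v‖) * ‖v‖ :=
              mul_le_mul_of_nonneg_right hl (norm_nonneg v)
          _ = L * t * ‖v‖ ^ 2 := by ring
      linarith
  have := hmono (left_mem_Icc.mpr zero_le_one) (right_mem_Icc.mpr zero_le_one) zero_le_one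
  simp only [hφ] at this
  norm_num at this
  rw [grad_apply'] at this
  linarith

end Aux

/-- variable-step gradient descent for a coercive objective converges to the
critical set. `f : ℝ^d → ℝ` nonnegative, `C²`, uniform Hessian bound `L`, coercive;
nonincreasing steps `0 ≤ α_m ≤ 1/L` with divergent partial sums; iteration
`w_{m+1} = w_m − α_m∇f(w_m)`. Then `dist(w_m, 𝓒) → 0` where `𝓒 = {w : ∇f(w) = 0}`. -/
theorem stmt5 {d : ℕ} (f : EuclideanSpace ℝ (Fin d) → ℝ) (L : ℝ)
    (hf : ContDiff ℝ 2 f) (hf0 : ∀ w, 0 ≤ f w)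
    (hHess : ∀ w, ‖fderiv ℝ (gradient f) w‖ ≤ L) (hL : 0 < L)
    (hcoer : Tendsto f (cocompact (EuclideanSpace ℝ (Fin d))) atTop)
    (α : ℕ → ℝ) (hα : ∀ m, 0 ≤ α m) (hα' : ∀ m, α m ≤ 1 / L) (hmono : Antitone α)
    (hdiv : Tendsto (fun M => ∑ m ∈ Finset.range M, α m) atTop atTop)
    (w : ℕ → EuclideanSpace ℝ (Fin d))
    (hiter : ∀ m, w (m + 1) = w m - α m • gradient f (w m)) :
    Tendsto (fun m => Metric.infDist (w m) {x | gradient f x = 0}) atTop (nhds 0) := by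
  set C : Set (EuclideanSpace ℝ (Fin d)) := {x | gradient f x = 0} with hC
  -- gradient is C¹
  have hg1 : ContDiff ℝ 1 (gradient f) :=
    (InnerProductSpace.toDual ℝ (EuclideanSpace ℝ (Fin d))).symm.contDiff.comp (hf.fderiv_right (by norm_num))
  -- gradient is L-Lipschitz
  have hlip : ∀ x y : EuclideanSpace ℝ (Fin d), ‖gradient f x - gradient f y‖ ≤ L * ‖x - y‖ := by
    have hlw : LipschitzWith L.toNNReal (gradient f) := by
      apply lipschitzWith_of_nnnorm_fderiv_le (hg1.differentiable one_ne_zero)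
      intro x
      rw [← norm_toNNReal]
      exact Real.toNNReal_mono (hHess x)
    intro x y
    have := hlw.dist_le_mul x y
    rwa [dist_eq_norm, dist_eq_norm, Real.coe_toNNReal _ hL.le] at this
  -- descent step
  have key : ∀ m, f (w (m + 1)) + α m / 2 * ‖gradient f (w m)‖ ^ 2 ≤ f (w m) := by
    intro m
    have hd := descent' hf hlip (w m) (-(α m • gradient f (w m)))
    rw [← sub_eq_add_neg, ← hiter m] at hd
    have hi : ⟪gradient f (w m), -(α m • gradient f (w m))⟫ = -(α m * ‖gradient f (w m)‖ ^ 2) := by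
      rw [inner_neg_right, real_inner_smul_right, real_inner_self_eq_norm_sq]
    have hn : ‖-(α m • gradient f (w m))‖ ^ 2 = α m ^ 2 * ‖gradient f (w m)‖ ^ 2 := by
      rw [norm_neg, norm_smul, mul_pow, Real.norm_eq_abs, sq_abs]
    rw [hi, hn] at hd
    have hαL : α m * L ≤ 1 := by
      have := mul_le_mul_of_nonneg_right (hα' m) hL.le
      rwa [one_div_mul_cancel hL.ne'] at this
    nlinarith [sq_nonneg (‖gradient f (w m)‖), hα m, mul_nonneg (hα m) (sq_nonneg (‖gradient f (w m)‖))]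
  -- partial sums bounded
  set S : ℕ → ℝ := fun M => ∑ m ∈ Finset.range M, α m * ‖gradient f (w m)‖ ^ 2 with hS
  have hSbound : ∀ M, S M + 2 * f (w M) ≤ 2 * f (w 0) := by
    intro M
    induction M with
    | zero => simp [hS]
    | succ M ih =>
      have := key M
      have hstep : S (M + 1) = S M + α M * ‖gradient f (w M)‖ ^ 2 := Finset.sum_range_succ _ M
      linarith
  have hSle : ∀ M, S M ≤ 2 * f (w 0) := fun M => by
    have := hSbound M; have := hf0 (w M); linarith
  have hSnn : ∀ m, 0 ≤ α m * ‖gradient f (w m)‖ ^ 2 := fun m => mul_nonneg (hα m) (sq_nonneg _)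
  -- iterates stay in sublevel set K
  have hfmono : ∀ M, f (w M) ≤ f (w 0) := by
    intro M
    induction M with
    | zero => exact le_refl _
    | succ M ih =>
      have h1 := key M
      have h2 := hSnn M
      linarith
  set K : Set (EuclideanSpace ℝ (Fin d)) := f ⁻¹' Iic (f (w 0)) with hK
  have hWK : ∀ m, w m ∈ K := fun m => by simpa [hK] using hfmono m
  have hKcpt : IsCompact K := by
    have h1 : {x : EuclideanSpace ℝ (Fin d) | f (w 0) < f x} ∈ cocompact (EuclideanSpace ℝ (Fin d)) :=
      hcoer (Ioi_mem_atTop (f (w 0)))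
    rw [mem_cocompact] at h1
    obtain ⟨t, htc, hts⟩ := h1
    apply htc.of_isClosed_subset (isClosed_Iic.preimage hf.continuous)
    intro x hx
    by_contra hxt
    exact absurd (hts hxt) (by simpa [hK] using hx)
  -- step displacement
  have hstep : ∀ m, dist (w (m + 1)) (w m) = α m * ‖gradient f (w m)‖ := by
    intro m
    rw [dist_eq_norm, hiter m, sub_sub_cancel_left, norm_neg, norm_smul,
      Real.norm_eq_abs, abs_of_nonneg (hα m)]
  have hpath : ∀ i j, i ≤ j → dist (w i) (w j) ≤ ∑ m ∈ Finset.Ico i j, α m * ‖gradient f (w m)‖ := by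
    intro i j hij
    induction j, hij using Nat.le_induction with
    | base => simp
    | succ j hij ih =>
      calc dist (w i) (w (j + 1)) ≤ dist (w i) (w j) + dist (w j) (w (j + 1)) :=
            dist_triangle _ _ _
        _ ≤ (∑ m ∈ Finset.Ico i j, α m * ‖gradient f (w m)‖) + α j * ‖gradient f (w j)‖ := by
            rw [dist_comm (w j)]
            exact add_le_add ih (le_of_eq (hstep j))
        _ = ∑ m ∈ Finset.Ico i (j + 1), α m * ‖gradient f (w m)‖ := by
            rw [Finset.sum_Ico_succ_top hij]
  -- main convergence
  rw [Metric.tendsto_atTop]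
  intro ε hε
  by_contra hc
  push_neg at hc
  have hbad : ∀ N, ∃ n, N ≤ n ∧ ε ≤ Metric.infDist (w n) C := by
    intro N
    obtain ⟨n, hn, h⟩ := hc N
    refine ⟨n, hn, ?_⟩
    rwa [Real.dist_eq, sub_zero, abs_of_nonneg Metric.infDist_nonneg] at h
  -- choose threshold δ'
  obtain ⟨δ, hδpos, hδle, hδ⟩ :
      ∃ δ : ℝ, 0 < δ ∧ δ ≤ L * ε / 4 ∧
        ∀ x ∈ K, ‖gradient f x‖ < δ → Metric.infDist x C < ε / 2 := by
    set A : Set (EuclideanSpace ℝ (Fin d)) := K ∩ {x | ε / 2 ≤ Metric.infDist x C} with hA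
    have hAcpt : IsCompact A :=
      hKcpt.inter_right (isClosed_le continuous_const (Metric.continuous_infDist_pt C))
    have hLε : 0 < L * ε / 4 := by positivity
    rcases A.eq_empty_or_nonempty with hAe | hAne
    · refine ⟨L * ε / 4, hLε, le_refl _, fun x hx _ => ?_⟩
      by_contra hcon
      push_neg at hcon
      exact absurd (by exact ⟨hx, hcon⟩ : x ∈ A) (by simp [hAe])
    · obtain ⟨x₀, hx₀A, hx₀min⟩ :=
        hAcpt.exists_isMinOn hAne (hg1.continuous.norm.continuousOn)
      have hx₀pos : 0 < ‖gradient f x₀‖ := by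
        rcases eq_or_lt_of_le (norm_nonneg (gradient f x₀)) with h | h
        · exfalso
          have h0 : gradient f x₀ = 0 := by rwa [eq_comm, norm_eq_zero] at h
          have hd0 : Metric.infDist x₀ C = 0 :=
            Metric.infDist_zero_of_mem (by simpa [hC] using h0)
          have h2 : ε / 2 ≤ Metric.infDist x₀ C := hx₀A.2
          rw [hd0] at h2
          linarith
        · exact h
      refine ⟨min ‖gradient f x₀‖ (L * ε / 4), lt_min hx₀pos hLε, min_le_right _ _, ?_⟩
      intro x hxK hxlt
      by_contra hcon
      push_neg at hcon
      have hxA : x ∈ A := ⟨hxK, hcon⟩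
      have := hx₀min hxA
      have : ‖gradient f x₀‖ ≤ ‖gradient f x‖ := this
      have := lt_of_lt_of_le hxlt (min_le_left _ _)
      linarith
  -- infinitely many small gradients
  have hsmall : ∀ N, ∃ m, N ≤ m ∧ ‖gradient f (w m)‖ < δ := by
    intro N
    by_contra hcon
    push_neg at hcon
    -- then α sums on [N, M) are bounded
    obtain ⟨M, hM⟩ := (tendsto_atTop.mp hdiv
      ((∑ m ∈ Finset.range N, α m) + 2 * f (w 0) / δ ^ 2 + 1)).exists
    have hNM : N ≤ M := by
      by_contra hNM
      push_neg at hNM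
      have h1 : (∑ m ∈ Finset.range M, α m) ≤ ∑ m ∈ Finset.range N, α m :=
        Finset.sum_le_sum_of_subset_of_nonneg
          (Finset.range_subset_range.mpr hNM.le) (fun i _ _ => hα i)
      have h2 : 0 ≤ 2 * f (w 0) / δ ^ 2 := div_nonneg (by linarith [hf0 (w 0)]) (by positivity)
      linarith
    have h3 : δ ^ 2 * ∑ m ∈ Finset.Ico N M, α m ≤ S M := by
      rw [Finset.mul_sum]
      calc ∑ m ∈ Finset.Ico N M, δ ^ 2 * α m
          ≤ ∑ m ∈ Finset.Ico N M, α m * ‖gradient f (w m)‖ ^ 2 := by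
            apply Finset.sum_le_sum
            intro m hm
            rw [Finset.mem_Ico] at hm
            have := hcon m hm.1
            have h4 : δ ^ 2 ≤ ‖gradient f (w m)‖ ^ 2 :=
              pow_le_pow_left₀ hδpos.le this 2
            calc δ ^ 2 * α m = α m * δ ^ 2 := by ring
              _ ≤ α m * ‖gradient f (w m)‖ ^ 2 := mul_le_mul_of_nonneg_left h4 (hα m)
        _ ≤ S M := Finset.sum_le_sum_of_subset_of_nonneg
            (by intro i hi; rw [Finset.mem_Ico] at hi; exact Finset.mem_range.mpr hi.2)
            (fun i _ _ => hSnn i)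
    have h5 : (∑ m ∈ Finset.Ico N M, α m) = (∑ m ∈ Finset.range M, α m)
        - ∑ m ∈ Finset.range N, α m := by
      rw [Finset.sum_Ico_eq_sub _ hNM]
    have h6 := hSle M
    rw [h5] at h3
    have h7 : (∑ m ∈ Finset.range M, α m) - ∑ m ∈ Finset.range N, α m
        ≤ 2 * f (w 0) / δ ^ 2 := by
      rw [le_div_iff₀ (by positivity : (0:ℝ) < δ ^ 2)]
      nlinarith
    linarith
  -- crossing lemma
  have hcross : ∀ N, ∃ b, N ≤ b ∧
      δ * ε / 4 ≤ ∑ m ∈ Finset.Ico N b, α m * ‖gradient f (w m)‖ ^ 2 := by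
    intro N
    obtain ⟨m₀, hm₀N, hm₀⟩ := hsmall N
    obtain ⟨b, hbm₀, hb⟩ := hbad (m₀ + 1)
    have hm₀b : m₀ < b := hbm₀
    set T : Finset ℕ := (Finset.Ico m₀ b).filter (fun a => ‖gradient f (w a)‖ < δ) with hT
    have hTne : T.Nonempty :=
      ⟨m₀, by simp [hT, Finset.mem_Ico, hm₀b, hm₀]⟩
    set a : ℕ := T.max' hTne with ha
    have haT : a ∈ T := T.max'_mem hTne
    rw [hT, Finset.mem_filter, Finset.mem_Ico] at haT
    obtain ⟨⟨ham₀, hab⟩, hga⟩ := haT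
    have hbig : ∀ m, a < m → m < b → δ ≤ ‖gradient f (w m)‖ := by
      intro m ham hmb
      by_contra hcon
      push_neg at hcon
      have hmT : m ∈ T := by
        rw [hT, Finset.mem_filter, Finset.mem_Ico]
        exact ⟨⟨le_trans ham₀ ham.le, hmb⟩, hcon⟩
      exact absurd (T.le_max' m hmT) (not_le.mpr ham)
    -- dist at a is small
    have hda : Metric.infDist (w a) C < ε / 2 := hδ (w a) (hWK a) hga
    -- one step from a is small
    have hstepa : dist (w (a + 1)) (w a) ≤ ε / 4 := by
      rw [hstep a]
      calc α a * ‖gradient f (w a)‖ ≤ (1 / L) * δ :=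
            mul_le_mul (hα' a) hga.le (norm_nonneg _) (by positivity)
        _ ≤ (1 / L) * (L * ε / 4) := by
            apply mul_le_mul_of_nonneg_left hδle (by positivity)
        _ = ε / 4 := by field_simp
    have hda1 : Metric.infDist (w (a + 1)) C < 3 * ε / 4 := by
      calc Metric.infDist (w (a + 1)) C
          ≤ Metric.infDist (w a) C + dist (w (a + 1)) (w a) :=
            Metric.infDist_le_infDist_add_dist
        _ < ε / 2 + ε / 4 := by
            apply add_lt_add_of_lt_of_le hda hstepa
        _ = 3 * ε / 4 := by ring
    -- the path from a+1 to b is long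
    have ha1b : a + 1 ≤ b := hab
    have hlong : ε / 4 ≤ ∑ m ∈ Finset.Ico (a + 1) b, α m * ‖gradient f (w m)‖ := by
      have h1 : ε ≤ Metric.infDist (w b) C := hb
      have h2 : Metric.infDist (w b) C
          ≤ Metric.infDist (w (a + 1)) C + dist (w b) (w (a + 1)) :=
        Metric.infDist_le_infDist_add_dist
      have h3 : dist (w b) (w (a + 1)) ≤ ∑ m ∈ Finset.Ico (a + 1) b, α m * ‖gradient f (w m)‖ := by
        rw [dist_comm]
        exact hpath (a + 1) b ha1b
      linarith
    refine ⟨b, le_trans hm₀N (le_of_lt hm₀b), ?_⟩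
    calc δ * ε / 4 = δ * (ε / 4) := by ring
      _ ≤ δ * ∑ m ∈ Finset.Ico (a + 1) b, α m * ‖gradient f (w m)‖ :=
          mul_le_mul_of_nonneg_left hlong hδpos.le
      _ = ∑ m ∈ Finset.Ico (a + 1) b, δ * (α m * ‖gradient f (w m)‖) := Finset.mul_sum _ _ _
      _ ≤ ∑ m ∈ Finset.Ico (a + 1) b, α m * ‖gradient f (w m)‖ ^ 2 := by
          apply Finset.sum_le_sum
          intro m hm
          rw [Finset.mem_Ico] at hm
          have hδm := hbig m hm.1 hm.2
          have h0 : 0 ≤ α m * ‖gradient f (w m)‖ := mul_nonneg (hα m) (norm_nonneg _)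
          calc δ * (α m * ‖gradient f (w m)‖) ≤ ‖gradient f (w m)‖ * (α m * ‖gradient f (w m)‖) :=
                mul_le_mul_of_nonneg_right hδm h0
            _ = α m * ‖gradient f (w m)‖ ^ 2 := by ring
      _ ≤ ∑ m ∈ Finset.Ico N b, α m * ‖gradient f (w m)‖ ^ 2 := by
          apply Finset.sum_le_sum_of_subset_of_nonneg
          · apply Finset.Ico_subset_Ico (le_trans hm₀N (le_trans ham₀ (Nat.le_succ a))) le_rfl
          · exact fun i _ _ => hSnn i
  -- iterate crossings to contradict boundedness
  have hgrow : ∀ k : ℕ, ∃ M, (k : ℝ) * (δ * ε / 4) ≤ S M := by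
    intro k
    induction k with
    | zero => exact ⟨0, by simp [hS]⟩
    | succ k ih =>
      obtain ⟨M, hM⟩ := ih
      obtain ⟨b, hMb, hb⟩ := hcross M
      refine ⟨b, ?_⟩
      have hsplit : S M + ∑ m ∈ Finset.Ico M b, α m * ‖gradient f (w m)‖ ^ 2 = S b :=
        Finset.sum_range_add_sum_Ico _ hMb
      push_cast
      linarith
  obtain ⟨k, hk⟩ := exists_nat_gt (2 * f (w 0) / (δ * ε / 4))
  obtain ⟨M, hM⟩ := hgrow k
  have hkc : 2 * f (w 0) < (k : ℝ) * (δ * ε / 4) := by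
    rw [div_lt_iff₀ (by positivity : (0:ℝ) < δ * ε / 4)] at hk
    linarith
  linarith [hSle M]
end

section
/- Under the SGD setup, if the step sizes satisfy 0 ≤ α_m ≤ 1/L and E[f(w_1)] < ∞, then for every m: −2α_m·E[|∇f(w_m)|²] − (σ²L/2)·α_m² ≤ E[f(w_{m+1})] − E[f(w_m)] ≤ −(α_m/2)·E[|∇f(w_m)|²] + (σ²L/2)·α_m². -/
open Filter MeasureTheory ProbabilityTheory

local notation "⟪" x ", " y "⟫" => @inner ℝ _ _ x y

private lemma sgd_grad_diff {d : ℕ} {f : EuclideanSpace ℝ (Fin d) → ℝ} (hf : ContDiff ℝ 2 f) :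
    Differentiable ℝ (gradient f) := by
  have h1 : ContDiff ℝ 1 (fderiv ℝ f) := hf.fderiv_right (by norm_num)
  have : Differentiable ℝ (fderiv ℝ f) := h1.differentiable (by norm_num)
  exact (InnerProductSpace.toDual ℝ (EuclideanSpace ℝ (Fin d))).symm.differentiable.comp this

private lemma sgd_grad_lip {d : ℕ} {f : EuclideanSpace ℝ (Fin d) → ℝ} {L : ℝ}
    (hf : ContDiff ℝ 2 f)
    (hHess : ∀ x, ‖fderiv ℝ (gradient f) x‖ ≤ L) (x y : EuclideanSpace ℝ (Fin d)) :
    ‖gradient f y - gradient f x‖ ≤ L * ‖y - x‖ :=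
  (convex_univ).norm_image_sub_le_of_norm_fderiv_le
    (fun z _ => sgd_grad_diff hf z) (fun z _ => hHess z) trivial trivial

private lemma sgd_taylor {d : ℕ} {f : EuclideanSpace ℝ (Fin d) → ℝ} {L : ℝ}
    (hf : ContDiff ℝ 2 f)
    (hHess : ∀ x, ‖fderiv ℝ (gradient f) x‖ ≤ L) (x y : EuclideanSpace ℝ (Fin d)) :
    |f y - f x - ⟪gradient f x, y - x⟫| ≤ L / 2 * ‖y - x‖ ^ 2 := by
  have hd : Differentiable ℝ f := hf.differentiable (by norm_num)
  have hgd : Differentiable ℝ (gradient f) := sgd_grad_diff hf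
  have hgc : Continuous (gradient f) := hgd.continuous
  set v := y - x with hv
  set c : ℝ → EuclideanSpace ℝ (Fin d) := fun t => x + t • v with hc
  have hφ : ∀ t : ℝ, HasDerivAt (fun t => f (c t)) ⟪gradient f (c t), v⟫ t := by
    intro t
    have hcur : HasDerivAt c v t := by
      have := ((hasDerivAt_id t).smul_const v).const_add x
      simp only [id_eq, one_smul] at this
      exact this
    have hfd : HasFDerivAt f (InnerProductSpace.toDual ℝ _ (gradient f (c t))) (c t) :=
      (hd (c t)).hasGradientAt.hasFDerivAt
    have := hfd.comp_hasDerivAt t hcur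
    rw [InnerProductSpace.toDual_apply_apply] at this
    exact this
  have hcont : Continuous fun t : ℝ => ⟪gradient f (c t), v⟫ :=
    (hgc.comp (continuous_const.add (continuous_id.smul continuous_const))).inner
      continuous_const
  have hint : ∫ t in (0:ℝ)..1, ⟪gradient f (c t), v⟫ = f (c 1) - f (c 0) :=
    intervalIntegral.integral_eq_sub_of_hasDerivAt (fun t _ => hφ t)
      (hcont.intervalIntegrable 0 1)
  have hc0 : c 0 = x := by simp [hc]
  have hc1 : c 1 = y := by simp [hc, hv]
  have key : f y - f x - ⟪gradient f x, v⟫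
      = ∫ t in (0:ℝ)..1, (⟪gradient f (c t), v⟫ - ⟪gradient f x, v⟫) := by
    rw [intervalIntegral.integral_sub (hcont.intervalIntegrable 0 1)
      (intervalIntegrable_const), intervalIntegral.integral_const]
    rw [hint, hc0, hc1]
    simp
  rw [key, ← Real.norm_eq_abs]
  have hb : ∀ t ∈ Set.uIoc (0:ℝ) 1,
      ‖⟪gradient f (c t), v⟫ - ⟪gradient f x, v⟫‖ ≤ (L * ‖v‖ ^ 2) * t := by
    intro t ht
    rw [Set.uIoc_of_le zero_le_one] at ht
    have h1 : ⟪gradient f (c t), v⟫ - ⟪gradient f x, v⟫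
        = ⟪gradient f (c t) - gradient f x, v⟫ := by rw [inner_sub_left]
    rw [h1, Real.norm_eq_abs]
    calc |⟪gradient f (c t) - gradient f x, v⟫| ≤ ‖gradient f (c t) - gradient f x‖ * ‖v‖ :=
          abs_real_inner_le_norm _ _
      _ ≤ (L * ‖c t - x‖) * ‖v‖ :=
          mul_le_mul_of_nonneg_right (sgd_grad_lip hf hHess x (c t)) (norm_nonneg _)
      _ = (L * ‖v‖ ^ 2) * t := by
          have : c t - x = t • v := by simp [hc]
          rw [this, norm_smul, Real.norm_eq_abs, abs_of_pos ht.1]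
          ring
  calc ‖∫ t in (0:ℝ)..1, (⟪gradient f (c t), v⟫ - ⟪gradient f x, v⟫)‖
      ≤ |∫ t in (0:ℝ)..1, (L * ‖v‖ ^ 2) * t| :=
        intervalIntegral.norm_integral_le_abs_of_norm_le
          ((ae_restrict_iff' measurableSet_uIoc).mpr (ae_of_all _ hb))
          ((continuous_const.mul continuous_id).intervalIntegrable 0 1)
    _ = ∫ t in (0:ℝ)..1, (L * ‖v‖ ^ 2) * t := by
        rw [abs_of_nonneg]
        apply intervalIntegral.integral_nonneg zero_le_one
        intro u hu
        have h0 : (0:ℝ) ≤ L := le_trans (norm_nonneg _) (hHess x)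
        exact mul_nonneg (by positivity) hu.1
    _ = L / 2 * ‖v‖ ^ 2 := by
        rw [intervalIntegral.integral_const_mul, integral_id]
        ring

private lemma sgd_grad_sq_le {d : ℕ} {f : EuclideanSpace ℝ (Fin d) → ℝ} {L : ℝ}
    (hf : ContDiff ℝ 2 f) (hf0 : ∀ x, 0 ≤ f x)
    (hHess : ∀ x, ‖fderiv ℝ (gradient f) x‖ ≤ L) (hL : 0 < L)
    (x : EuclideanSpace ℝ (Fin d)) : ‖gradient f x‖ ^ 2 ≤ 2 * L * f x := by
  set h := gradient f x with hh
  have hT := sgd_taylor hf hHess x (x - L⁻¹ • h)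
  have h1 : x - L⁻¹ • h - x = -(L⁻¹ • h) := sub_sub_cancel_left _ _
  rw [h1] at hT
  have h2 : ⟪h, -(L⁻¹ • h)⟫ = -(L⁻¹ * ‖h‖ ^ 2) := by
    rw [inner_neg_right, real_inner_smul_right, real_inner_self_eq_norm_sq]
  have h3 : ‖-(L⁻¹ • h)‖ ^ 2 = L⁻¹ ^ 2 * ‖h‖ ^ 2 := by
    rw [norm_neg, norm_smul, Real.norm_eq_abs, mul_pow, sq_abs]
  rw [h2, h3] at hT
  have h4 := hf0 (x - L⁻¹ • h)
  have h5 := (abs_le.mp hT).2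
  have h6 : L / 2 * (L⁻¹ ^ 2 * ‖h‖ ^ 2) = L⁻¹ / 2 * ‖h‖ ^ 2 := by
    field_simp
  rw [h6] at h5
  have h7 : L⁻¹ / 2 * ‖h‖ ^ 2 ≤ f x := by linarith
  calc ‖h‖ ^ 2 = 2 * L * (L⁻¹ / 2 * ‖h‖ ^ 2) := by field_simp
    _ ≤ 2 * L * f x := by
        apply mul_le_mul_of_nonneg_left h7 (by positivity)

private lemma sgd_coord_sq_le {d : ℕ} (x : EuclideanSpace ℝ (Fin d)) (i : Fin d) :
    x i ^ 2 ≤ ‖x‖ ^ 2 := by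
  rw [← real_inner_self_eq_norm_sq]
  have : ⟪x, x⟫ = ∑ j, x j * x j := by
    simp only [PiLp.inner_apply, RCLike.inner_apply, conj_trivial, mul_comm]
  rw [this, sq]
  exact Finset.single_le_sum (fun j _ => mul_self_nonneg (x j)) (Finset.mem_univ i)

private lemma sgd_inner_sum {d : ℕ} (x y : EuclideanSpace ℝ (Fin d)) :
    ⟪x, y⟫ = ∑ i, x i * y i := by
  simp [PiLp.inner_apply, RCLike.inner_apply, mul_comm]

/-- key one-step estimate for SGD. Setup: `f : ℝ^d → ℝ` nonnegative `C²` with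
uniform Hessian bound `L`; on a filtered probability space, iterates
`w_{m+1} = w_m − α_m g_m` (indexed from `0`, so `w 0` is the initial iterate `w_1`) with
`w_m` measurable w.r.t. `𝓕 m`, unbiased gradient estimators `E[g_m | 𝓕 m] = ∇f(w_m)` a.s.,
finite second moments, and variance bound `E[‖g_m‖² − ‖∇f(w_m)‖²] ≤ σ²`. If `0 ≤ α_m ≤ 1/L`
and `E[f(w_0)] < ∞` then for every `m`,
`−2α_m E[‖∇f(w_m)‖²] − (σ²L/2)α_m² ≤ E[f(w_{m+1})] − E[f(w_m)]
   ≤ −(α_m/2) E[‖∇f(w_m)‖²] + (σ²L/2)α_m²`. -/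
theorem stmt6 {d : ℕ} (f : EuclideanSpace ℝ (Fin d) → ℝ) (L σ : ℝ)
    (hf : ContDiff ℝ 2 f) (hf0 : ∀ x, 0 ≤ f x)
    (hHess : ∀ x, ‖fderiv ℝ (gradient f) x‖ ≤ L) (hL : 0 < L)
    {Ω : Type*} [inst : MeasurableSpace Ω] (μ : Measure Ω) [IsProbabilityMeasure μ]
    (𝓕 : ℕ → MeasurableSpace Ω) (h𝓕 : ∀ m, 𝓕 m ≤ inst)
    (w g : ℕ → Ω → EuclideanSpace ℝ (Fin d)) (α : ℕ → ℝ)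
    (hw : ∀ m, StronglyMeasurable[𝓕 m] (w m))
    (hg : ∀ m, AEStronglyMeasurable (g m) μ)
    (hiter : ∀ m, ∀ ω, w (m + 1) ω = w m ω - α m • g m ω)
    (hunbiased : ∀ m, μ[g m | 𝓕 m] =ᵐ[μ] fun ω => gradient f (w m ω))
    (hg2 : ∀ m, Integrable (fun ω => ‖g m ω‖ ^ 2) μ)
    (hvar : ∀ m, ∫ ω, (‖g m ω‖ ^ 2 - ‖gradient f (w m ω)‖ ^ 2) ∂μ ≤ σ ^ 2)
    (hα : ∀ m, 0 ≤ α m) (hαL : ∀ m, α m ≤ 1 / L)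
    (hint : Integrable (fun ω => f (w 0 ω)) μ) :
    ∀ m,
      -(2 * α m) * (∫ ω, ‖gradient f (w m ω)‖ ^ 2 ∂μ) - σ ^ 2 * (L / 2) * (α m) ^ 2 ≤
          (∫ ω, f (w (m + 1) ω) ∂μ) - ∫ ω, f (w m ω) ∂μ ∧
        (∫ ω, f (w (m + 1) ω) ∂μ) - ∫ ω, f (w m ω) ∂μ ≤
          -(α m / 2) * (∫ ω, ‖gradient f (w m ω)‖ ^ 2 ∂μ) + σ ^ 2 * (L / 2) * (α m) ^ 2 := by
  have hgc : Continuous (gradient f) := (sgd_grad_diff hf).continuous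
  have hfc : Continuous f := hf.continuous
  have key : ∀ m, Integrable (fun ω => f (w m ω)) μ →
      Integrable (fun ω => f (w (m + 1) ω)) μ ∧
      (-(2 * α m) * (∫ ω, ‖gradient f (w m ω)‖ ^ 2 ∂μ) - σ ^ 2 * (L / 2) * (α m) ^ 2 ≤
          (∫ ω, f (w (m + 1) ω) ∂μ) - ∫ ω, f (w m ω) ∂μ ∧
        (∫ ω, f (w (m + 1) ω) ∂μ) - ∫ ω, f (w m ω) ∂μ ≤
          -(α m / 2) * (∫ ω, ‖gradient f (w m ω)‖ ^ 2 ∂μ) + σ ^ 2 * (L / 2) * (α m) ^ 2) := by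
    intro m hIm
    -- measurability
    have hwm_sm : StronglyMeasurable (w m) := (hw m).mono (h𝓕 m)
    have hh_smF : StronglyMeasurable[𝓕 m] (fun ω => gradient f (w m ω)) :=
      hgc.comp_stronglyMeasurable (hw m)
    have hh_sm : StronglyMeasurable (fun ω => gradient f (w m ω)) :=
      hgc.comp_stronglyMeasurable hwm_sm
    have hh_ae : AEStronglyMeasurable (fun ω => gradient f (w m ω)) μ :=
      hh_sm.aestronglyMeasurable
    have hgm_ae : AEStronglyMeasurable (g m) μ := hg m
    -- integrability of |grad|^2
    have hh2_int : Integrable (fun ω => ‖gradient f (w m ω)‖ ^ 2) μ := by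
      refine (hIm.const_mul (2 * L)).mono
        ((continuous_pow 2).comp_aestronglyMeasurable hh_ae.norm) (ae_of_all _ fun ω => ?_)
      have h1 := sgd_grad_sq_le hf hf0 hHess hL (w m ω)
      have h2 : (0:ℝ) ≤ ‖gradient f (w m ω)‖ ^ 2 := sq_nonneg _
      simp only [Real.norm_eq_abs, Function.comp]
      rw [abs_of_nonneg h2]
      exact h1.trans (le_abs_self _)
    have hg_int : Integrable (g m) μ := by
      refine ((integrable_const (1:ℝ)).add (hg2 m)).mono hgm_ae (ae_of_all _ fun ω => ?_)
      have : ‖g m ω‖ ≤ 1 + ‖g m ω‖ ^ 2 := by nlinarith [norm_nonneg (g m ω)]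
      refine this.trans (le_abs_self _)
    have hh_int : Integrable (fun ω => gradient f (w m ω)) μ := by
      refine ((integrable_const (1:ℝ)).add hh2_int).mono hh_ae (ae_of_all _ fun ω => ?_)
      have : ‖gradient f (w m ω)‖ ≤ 1 + ‖gradient f (w m ω)‖ ^ 2 := by
        nlinarith [norm_nonneg (gradient f (w m ω))]
      refine this.trans (le_abs_self _)
    have hinner_ae : AEStronglyMeasurable (fun ω => ⟪gradient f (w m ω), g m ω⟫) μ :=
      hh_ae.inner hgm_ae
    have hinner_int : Integrable (fun ω => ⟪gradient f (w m ω), g m ω⟫) μ := by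
      refine ((hh2_int.add (hg2 m)).div_const 2).mono hinner_ae (ae_of_all _ fun ω => ?_)
      have h1 := abs_real_inner_le_norm (gradient f (w m ω)) (g m ω)
      have h2 : ‖gradient f (w m ω)‖ * ‖g m ω‖ ≤
          (‖gradient f (w m ω)‖ ^ 2 + ‖g m ω‖ ^ 2) / 2 := by
        nlinarith [sq_nonneg (‖gradient f (w m ω)‖ - ‖g m ω‖)]
      rw [Real.norm_eq_abs]
      exact (h1.trans h2).trans (le_abs_self _)
    -- coordinate conditional expectation
    haveI : SigmaFinite (μ.trim (h𝓕 m)) := by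
      have := isFiniteMeasure_trim (μ := μ) (h𝓕 m)
      infer_instance
    have hgi_int : ∀ i : Fin d, Integrable (fun ω => g m ω i) μ := fun i =>
      (EuclideanSpace.proj i (𝕜 := ℝ)).integrable_comp hg_int
    have hhi_int : ∀ i : Fin d, Integrable (fun ω => gradient f (w m ω) i) μ := fun i =>
      (EuclideanSpace.proj i (𝕜 := ℝ)).integrable_comp hh_int
    have hhi_smF : ∀ i : Fin d, StronglyMeasurable[𝓕 m] (fun ω => gradient f (w m ω) i) :=
      fun i => (EuclideanSpace.proj i (𝕜 := ℝ)).continuous.comp_stronglyMeasurable hh_smF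
    have hcond : ∀ i : Fin d, (μ[fun ω => g m ω i | 𝓕 m]) =ᵐ[μ]
        fun ω => gradient f (w m ω) i := by
      intro i
      refine (ae_eq_condExp_of_forall_setIntegral_eq (h𝓕 m) (hgi_int i)
        (fun s _ _ => (hhi_int i).integrableOn) (fun s hs hμs => ?_)
        (hhi_smF i).aestronglyMeasurable).symm
      have hs' : MeasurableSet s := h𝓕 m s hs
      have e1 : ∫ ω in s, g m ω i ∂μ = EuclideanSpace.proj i (𝕜 := ℝ) (∫ ω in s, g m ω ∂μ) := by
        simpa using
          ContinuousLinearMap.integral_comp_comm (EuclideanSpace.proj i (𝕜 := ℝ))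
            hg_int.integrableOn
      have e2 : ∫ ω in s, gradient f (w m ω) i ∂μ
          = EuclideanSpace.proj i (𝕜 := ℝ) (∫ ω in s, gradient f (w m ω) ∂μ) := by
        simpa using
          ContinuousLinearMap.integral_comp_comm (EuclideanSpace.proj i (𝕜 := ℝ))
            hh_int.integrableOn
      have e3 : ∫ ω in s, g m ω ∂μ = ∫ ω in s, gradient f (w m ω) ∂μ := by
        rw [← setIntegral_condExp (h𝓕 m) hg_int hs]
        exact setIntegral_congr_ae hs' ((hunbiased m).mono fun ω hω _ => hω)
      rw [e1, e2, e3]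
    -- key expectation identity
    have hprod_int : ∀ i : Fin d,
        Integrable (fun ω => gradient f (w m ω) i * g m ω i) μ := by
      intro i
      have hae : AEStronglyMeasurable (fun ω => gradient f (w m ω) i * g m ω i) μ :=
        (((EuclideanSpace.proj i (𝕜 := ℝ)).continuous.comp_stronglyMeasurable
          hh_sm).aestronglyMeasurable).mul
          ((EuclideanSpace.proj i (𝕜 := ℝ)).continuous.comp_aestronglyMeasurable hgm_ae)
      refine ((hh2_int.add (hg2 m)).div_const 2).mono hae (ae_of_all _ fun ω => ?_)
      have c1 := sgd_coord_sq_le (gradient f (w m ω)) i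
      have c2 := sgd_coord_sq_le (g m ω) i
      rw [Real.norm_eq_abs, abs_mul]
      have h2 : |gradient f (w m ω) i| * |g m ω i| ≤
          (‖gradient f (w m ω)‖ ^ 2 + ‖g m ω‖ ^ 2) / 2 := by
        nlinarith [sq_nonneg (|gradient f (w m ω) i| - |g m ω i|), sq_abs (gradient f (w m ω) i),
          sq_abs (g m ω i), abs_nonneg (gradient f (w m ω) i), abs_nonneg (g m ω i)]
      exact h2.trans (le_abs_self _)
    have hsq_int : ∀ i : Fin d,
        Integrable (fun ω => gradient f (w m ω) i * gradient f (w m ω) i) μ := by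
      intro i
      have hae : AEStronglyMeasurable (fun ω => gradient f (w m ω) i * gradient f (w m ω) i) μ :=
        (((EuclideanSpace.proj i (𝕜 := ℝ)).continuous.comp_stronglyMeasurable
          hh_sm).aestronglyMeasurable).mul
          (((EuclideanSpace.proj i (𝕜 := ℝ)).continuous.comp_stronglyMeasurable
          hh_sm).aestronglyMeasurable)
      refine hh2_int.mono hae (ae_of_all _ fun ω => ?_)
      have c1 := sgd_coord_sq_le (gradient f (w m ω)) i
      simp only [Real.norm_eq_abs]
      rw [abs_mul_self, ← sq]
      exact c1.trans (le_abs_self _)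
    -- key expectation identity
    have hEinner : ∫ ω, ⟪gradient f (w m ω), g m ω⟫ ∂μ
        = ∫ ω, ‖gradient f (w m ω)‖ ^ 2 ∂μ := by
      have e1 : (fun ω => ⟪gradient f (w m ω), g m ω⟫)
          = fun ω => ∑ i, gradient f (w m ω) i * g m ω i :=
        funext fun ω => sgd_inner_sum _ _
      have e2 : (fun ω => ‖gradient f (w m ω)‖ ^ 2)
          = fun ω => ∑ i, gradient f (w m ω) i * gradient f (w m ω) i := funext fun ω => by
        rw [← real_inner_self_eq_norm_sq]
        exact sgd_inner_sum _ _
      rw [e1, e2, integral_finset_sum _ (fun i _ => hprod_int i),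
        integral_finset_sum _ (fun i _ => hsq_int i)]
      refine Finset.sum_congr rfl fun i _ => ?_
      have t1 : ∫ ω, gradient f (w m ω) i * g m ω i ∂μ
          = ∫ ω, (μ[fun ω => gradient f (w m ω) i * g m ω i | 𝓕 m]) ω ∂μ :=
        (integral_condExp (h𝓕 m)).symm
      have t2 : μ[fun ω => gradient f (w m ω) i * g m ω i | 𝓕 m]
          =ᵐ[μ] (fun ω => gradient f (w m ω) i) * μ[fun ω => g m ω i | 𝓕 m] :=
        condExp_mul_of_stronglyMeasurable_left (hhi_smF i) (hprod_int i) (hgi_int i)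
      have t3 : (fun ω => gradient f (w m ω) i) * μ[fun ω => g m ω i | 𝓕 m]
          =ᵐ[μ] fun ω => gradient f (w m ω) i * gradient f (w m ω) i := by
        filter_upwards [hcond i] with ω hω
        simp only [Pi.mul_apply, hω]
      rw [t1, integral_congr_ae (t2.trans t3)]
    -- pointwise Taylor bound
    have hpt : ∀ ω, |f (w (m + 1) ω) - f (w m ω) + α m * ⟪gradient f (w m ω), g m ω⟫|
        ≤ L / 2 * α m ^ 2 * ‖g m ω‖ ^ 2 := by
      intro ω
      have ht := sgd_taylor hf hHess (w m ω) (w (m + 1) ω)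
      have hy : w (m + 1) ω - w m ω = -(α m • g m ω) := by
        rw [hiter m ω]; exact sub_sub_cancel_left _ _
      rw [hy, inner_neg_right, real_inner_smul_right] at ht
      have hn : ‖-(α m • g m ω)‖ ^ 2 = α m ^ 2 * ‖g m ω‖ ^ 2 := by
        rw [norm_neg, norm_smul, Real.norm_eq_abs, mul_pow, sq_abs]
      rw [hn] at ht
      have e : f (w (m + 1) ω) - f (w m ω) - -(α m * ⟪gradient f (w m ω), g m ω⟫)
          = f (w (m + 1) ω) - f (w m ω) + α m * ⟪gradient f (w m ω), g m ω⟫ := by ring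
      rw [e, ← mul_assoc] at ht
      exact ht
    -- integrability of the next iterate
    have hF_ae : AEStronglyMeasurable (fun ω => f (w (m + 1) ω)) μ := by
      have hw1 : AEStronglyMeasurable (w (m + 1)) μ := by
        have e : w (m + 1) = fun ω => w m ω - α m • g m ω := funext (hiter m)
        rw [e]
        exact hwm_sm.aestronglyMeasurable.sub (hgm_ae.const_smul (α m))
      exact hfc.comp_aestronglyMeasurable hw1
    have hF_int : Integrable (fun ω => f (w (m + 1) ω)) μ := by
      refine (hIm.add ((hinner_int.abs.const_mul (α m)).add
        ((hg2 m).const_mul (L / 2 * α m ^ 2)))).mono hF_ae (ae_of_all _ fun ω => ?_)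
      have h1 := (abs_le.mp (hpt ω)).2
      have h2 := hf0 (w (m + 1) ω)
      have h3 := hf0 (w m ω)
      have h5 : α m * (-⟪gradient f (w m ω), g m ω⟫) ≤ α m * |⟪gradient f (w m ω), g m ω⟫| :=
        mul_le_mul_of_nonneg_left (neg_le_abs _) (hα m)
      have h6 : (0:ℝ) ≤ ‖g m ω‖ ^ 2 := sq_nonneg _
      have h7 : (0:ℝ) ≤ L / 2 * α m ^ 2 * ‖g m ω‖ ^ 2 := by positivity
      have h8 := le_abs_self (f (w m ω) + (α m * |⟪gradient f (w m ω), g m ω⟫|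
        + L / 2 * α m ^ 2 * ‖g m ω‖ ^ 2))
      simp only [Real.norm_eq_abs, Pi.add_apply]
      rw [abs_of_nonneg h2]
      nlinarith
    -- integral estimates
    have hsub_int : Integrable (fun ω => f (w (m + 1) ω) - f (w m ω)) μ := hF_int.sub hIm
    have hX_int : Integrable (fun ω => f (w (m + 1) ω) - f (w m ω)
        + α m * ⟪gradient f (w m ω), g m ω⟫) μ :=
      hsub_int.add (hinner_int.const_mul (α m))
    have hXeq : ∫ ω, (f (w (m + 1) ω) - f (w m ω)
          + α m * ⟪gradient f (w m ω), g m ω⟫) ∂μ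
        = ((∫ ω, f (w (m + 1) ω) ∂μ) - ∫ ω, f (w m ω) ∂μ)
          + α m * ∫ ω, ‖gradient f (w m ω)‖ ^ 2 ∂μ := by
      rw [integral_add hsub_int (hinner_int.const_mul _), integral_sub hF_int hIm,
        integral_const_mul, hEinner]
    have habs : |∫ ω, (f (w (m + 1) ω) - f (w m ω)
          + α m * ⟪gradient f (w m ω), g m ω⟫) ∂μ|
        ≤ L / 2 * α m ^ 2 * ∫ ω, ‖g m ω‖ ^ 2 ∂μ := by
      have j1 : |∫ ω, (f (w (m + 1) ω) - f (w m ω)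
            + α m * ⟪gradient f (w m ω), g m ω⟫) ∂μ|
          ≤ ∫ ω, |f (w (m + 1) ω) - f (w m ω)
            + α m * ⟪gradient f (w m ω), g m ω⟫| ∂μ := by
        rw [← Real.norm_eq_abs]
        refine (norm_integral_le_integral_norm _).trans (le_of_eq ?_)
        simp [Real.norm_eq_abs]
      refine j1.trans ?_
      have j2 : ∫ ω, |f (w (m + 1) ω) - f (w m ω)
            + α m * ⟪gradient f (w m ω), g m ω⟫| ∂μ
          ≤ ∫ ω, L / 2 * α m ^ 2 * ‖g m ω‖ ^ 2 ∂μ :=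
        integral_mono hX_int.abs ((hg2 m).const_mul _) fun ω => hpt ω
      refine j2.trans (le_of_eq ?_)
      exact integral_const_mul _ _
    rw [hXeq] at habs
    obtain ⟨hlow, hhigh⟩ := abs_le.mp habs
    -- variance bound
    have hS : ∫ ω, ‖g m ω‖ ^ 2 ∂μ ≤ σ ^ 2 + ∫ ω, ‖gradient f (w m ω)‖ ^ 2 ∂μ := by
      have hv := hvar m
      rw [integral_sub (hg2 m) hh2_int] at hv
      linarith
    have hS0 : 0 ≤ ∫ ω, ‖g m ω‖ ^ 2 ∂μ := integral_nonneg fun ω => sq_nonneg _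
    have hG0 : 0 ≤ ∫ ω, ‖gradient f (w m ω)‖ ^ 2 ∂μ := integral_nonneg fun ω => sq_nonneg _
    have hαL1 : α m * L ≤ 1 := by
      have h9 := mul_le_mul_of_nonneg_right (hαL m) hL.le
      rwa [one_div, inv_mul_cancel₀ hL.ne'] at h9
    have hσ0 : (0:ℝ) ≤ σ ^ 2 := sq_nonneg σ
    have k1 : L / 2 * α m ^ 2 * (∫ ω, ‖g m ω‖ ^ 2 ∂μ)
        ≤ L / 2 * α m ^ 2 * (σ ^ 2 + ∫ ω, ‖gradient f (w m ω)‖ ^ 2 ∂μ) :=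
      mul_le_mul_of_nonneg_left hS (by positivity)
    have k2 : L / 2 * α m ^ 2 * (∫ ω, ‖gradient f (w m ω)‖ ^ 2 ∂μ)
        ≤ α m / 2 * ∫ ω, ‖gradient f (w m ω)‖ ^ 2 ∂μ := by
      nlinarith [mul_nonneg (mul_nonneg (hα m) hG0) (sub_nonneg.mpr hαL1)]
    refine ⟨hF_int, ?_, ?_⟩
    · nlinarith [mul_nonneg (hα m) hG0]
    · nlinarith [mul_nonneg (hα m) hG0]
  have hIall : ∀ m, Integrable (fun ω => f (w m ω)) μ := by
    intro m
    induction m with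
    | zero => exact hint
    | succ n ih => exact (key n ih).1
  exact fun m => (key m (hIall m)).2
end

section
/- Under the SGD setup, suppose in addition that the step sizes α_m are nonincreasing with 0 ≤ α_m ≤ 1/L, ∑_{m=1}^∞ α_m = ∞, α_m → 0 as m → ∞, and E[f(w_1)] < ∞. Then the step-size-weighted averages of the expected squared gradients converge to zero: (∑_{j=1}^m α_j · E[|∇f(w_j)|²]) / (∑_{j=1}^m α_j) → 0 as m → ∞. Equivalently, the time-averaged iterate z_m taking value w_j with probability α_j / ∑_{i=1}^m α_i (for j = 1,…,m, independently of the w's) satisfies E[|∇f(z_m)|²] → 0. -/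
open Filter MeasureTheory ProbabilityTheory

section SGDHelpers

open InnerProductSpace

local notation "⟪" x ", " y "⟫" => @inner ℝ _ _ x y

lemma sgd_descent {F : Type*} [NormedAddCommGroup F] [InnerProductSpace ℝ F] [CompleteSpace F]
    (f : F → ℝ) (L : ℝ) (hf : ContDiff ℝ 2 f)
    (hHess : ∀ x, ‖fderiv ℝ (gradient f) x‖ ≤ L) (hL : 0 ≤ L) (x v : F) :
    f (x + v) ≤ f x + ⟪gradient f x, v⟫ + L / 2 * ‖v‖ ^ 2 := by
  have hfd : Differentiable ℝ f := hf.differentiable two_ne_zero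
  have h1 : ContDiff ℝ 1 (fun y => fderiv ℝ f y) := hf.fderiv_right (by norm_num)
  have hgradcd : ContDiff ℝ 1 (gradient f) := by
    have : gradient f = fun y => (toDual ℝ F).symm (fderiv ℝ f y) := rfl
    rw [this]
    exact (toDual ℝ F).symm.contDiff.comp h1
  have hlip : LipschitzWith L.toNNReal (gradient f) := by
    refine lipschitzWith_of_nnnorm_fderiv_le (hgradcd.differentiable one_ne_zero) (fun y => ?_)
    rw [← NNReal.coe_le_coe, coe_nnnorm, Real.coe_toNNReal _ hL]
    exact hHess y
  have hinner : ∀ y u, ⟪gradient f y, u⟫ = fderiv ℝ f y u := by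
    intro y u
    show ⟪(toDual ℝ F).symm (fderiv ℝ f y), u⟫ = _
    rw [toDual_symm_apply]
  have hφ : ∀ t : ℝ, HasDerivAt (fun t : ℝ => f (x + t • v)) ⟪gradient f (x + t • v), v⟫ t := by
    intro t
    have hc : HasDerivAt (fun t : ℝ => x + t • v) v t := by
      simpa using ((hasDerivAt_id t).smul_const v).const_add x
    have := (hfd (x + t • v)).hasFDerivAt.comp_hasDerivAt t hc
    rw [hinner]
    exact this
  have hcont : Continuous fun t : ℝ => ⟪gradient f (x + t • v), v⟫ := by
    exact (hgradcd.continuous.comp (continuous_const.add (continuous_id.smul continuous_const))).inner continuous_const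
  have key : f (x + v) - f x = ∫ t in (0:ℝ)..1, ⟪gradient f (x + t • v), v⟫ := by
    have := intervalIntegral.integral_eq_sub_of_hasDerivAt (f := fun t : ℝ => f (x + t • v))
      (fun t _ => hφ t) (hcont.intervalIntegrable 0 1)
    simp only [one_smul, zero_smul, add_zero] at this
    rw [this]
  have hbound : ∀ t ∈ Set.Icc (0:ℝ) 1,
      ⟪gradient f (x + t • v), v⟫ ≤ ⟪gradient f x, v⟫ + L * ‖v‖ ^ 2 * t := by
    intro t ht
    have h2 : ⟪gradient f (x + t • v) - gradient f x, v⟫ ≤ ‖gradient f (x + t • v) - gradient f x‖ * ‖v‖ :=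
      real_inner_le_norm _ _
    have h3 : ‖gradient f (x + t • v) - gradient f x‖ ≤ L * (t * ‖v‖) := by
      have h5 := hlip.dist_le_mul (x + t • v) x
      rw [dist_eq_norm, dist_eq_norm, Real.coe_toNNReal _ hL] at h5
      calc ‖gradient f (x + t • v) - gradient f x‖ ≤ L * ‖x + t • v - x‖ := h5
        _ = L * (t * ‖v‖) := by
            rw [add_sub_cancel_left, norm_smul, Real.norm_eq_abs, abs_of_nonneg ht.1]
    have h4 : ⟪gradient f (x + t • v), v⟫ - ⟪gradient f x, v⟫ ≤ L * ‖v‖ ^ 2 * t := by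
      rw [← inner_sub_left]
      calc ⟪gradient f (x + t • v) - gradient f x, v⟫ ≤ ‖gradient f (x + t • v) - gradient f x‖ * ‖v‖ := h2
        _ ≤ L * (t * ‖v‖) * ‖v‖ := by
            apply mul_le_mul_of_nonneg_right h3 (norm_nonneg v)
        _ = L * ‖v‖ ^ 2 * t := by ring
    linarith
  have hint : ∫ t in (0:ℝ)..1, ⟪gradient f (x + t • v), v⟫ ≤
      ∫ t in (0:ℝ)..1, (⟪gradient f x, v⟫ + L * ‖v‖ ^ 2 * t) := by
    apply intervalIntegral.integral_mono_on zero_le_one (hcont.intervalIntegrable 0 1)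
    · exact ((continuous_const.add (continuous_const.mul continuous_id)).intervalIntegrable 0 1)
    · exact hbound
  have hval : ∫ t in (0:ℝ)..1, (⟪gradient f x, v⟫ + L * ‖v‖ ^ 2 * t) =
      ⟪gradient f x, v⟫ + L / 2 * ‖v‖ ^ 2 := by
    rw [intervalIntegral.integral_add (g := fun t => L * ‖v‖ ^ 2 * t) intervalIntegrable_const
      ((continuous_const.mul continuous_id').intervalIntegrable 0 1),
      intervalIntegral.integral_const_mul, integral_id, intervalIntegral.integral_const]
    norm_num
    ring
  linarith [key, hint.trans_eq hval]


lemma sgd_condexp_facts {Ω : Type*} {E : Type*} [NormedAddCommGroup E] [InnerProductSpace ℝ E]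
    [CompleteSpace E] {m m0 : MeasurableSpace Ω} (hm : m ≤ m0) {μ : Measure Ω}
    [IsProbabilityMeasure μ] {g X : Ω → E} (hgm : AEStronglyMeasurable g μ)
    (hg2 : Integrable (fun ω => ‖g ω‖ ^ 2) μ)
    (hX : μ[g|m] =ᵐ[μ] X) :
    MemLp X 2 μ ∧ ∫ ω, ⟪X ω, g ω⟫ ∂μ = ∫ ω, ‖X ω‖ ^ 2 ∂μ := by
  haveI : Fact (m ≤ m0) := ⟨hm⟩
  have hgmem : MemLp g 2 μ := (memLp_two_iff_integrable_sq_norm hgm).2 hg2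
  set G2 : Lp E 2 μ := hgmem.toLp g with hG2
  set PG := condExpL2 E ℝ hm G2 with hPGdef
  have hPG : (PG : Ω → E) =ᵐ[μ] μ[g|m] := by
    refine ae_eq_condExp_of_forall_setIntegral_eq hm (hgmem.integrable one_le_two)
      (fun s _ hμs => integrableOn_condExpL2_of_measure_ne_top hm hμs.ne _)
      (fun s hs hμs => ?_) (aestronglyMeasurable_condExpL2 hm _)
    rw [integral_condExpL2_eq hm G2 hs hμs.ne]
    exact setIntegral_congr_ae (hm s hs) (hgmem.coeFn_toLp.mono fun x hx _ => hx)
  have hXPG : X =ᵐ[μ] (PG : Ω → E) := hX.symm.trans hPG.symm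
  have hXmem : MemLp X 2 μ := (Lp.memLp ((PG : Lp E 2 μ))).ae_eq hXPG.symm
  refine ⟨hXmem, ?_⟩
  have hip1 : ∫ ω, ⟪X ω, g ω⟫ ∂μ = @inner ℝ _ _ ((PG : Lp E 2 μ)) G2 := by
    rw [MeasureTheory.L2.inner_def]
    refine integral_congr_ae ?_
    filter_upwards [hXPG, hgmem.coeFn_toLp] with ω h1 h2
    rw [h1, h2]
  have hproj : (PG : Lp E 2 μ) = (lpMeas E ℝ m 2 μ).orthogonalProjectionOnto G2 := rfl
  have horth : ⟪G2 - (PG : Lp E 2 μ), (PG : Lp E 2 μ)⟫ = 0 := by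
    rw [hproj]
    exact Submodule.starProjection_inner_eq_zero (K := lpMeas E ℝ m 2 μ) G2 _ PG.2
  have hip2 : @inner ℝ _ _ ((PG : Lp E 2 μ)) G2 = @inner ℝ _ _ ((PG : Lp E 2 μ)) ((PG : Lp E 2 μ)) := by
    rw [inner_sub_left, sub_eq_zero] at horth
    rw [real_inner_comm, ← horth]
  rw [hip1, hip2, MeasureTheory.L2.inner_def]
  refine integral_congr_ae ?_
  filter_upwards [hXPG] with ω h1
  rw [← h1, real_inner_self_eq_norm_sq]


lemma sgd_ratio_lim (C K : ℝ) (hC : 0 ≤ C) (hK : 0 ≤ K) (α u : ℕ → ℝ) (hα : ∀ n, 0 ≤ α n)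
    (hdiv : Tendsto (fun M => ∑ m ∈ Finset.range M, α m) atTop atTop)
    (hα0 : Tendsto α atTop (nhds 0))
    (hu : ∀ m, 0 ≤ u m)
    (hub : ∀ m, u m ≤ C + K * ∑ j ∈ Finset.range m, α j ^ 2) :
    Tendsto (fun m => u m / ∑ j ∈ Finset.range m, α j) atTop (nhds 0) := by
  rw [NormedAddCommGroup.tendsto_nhds_zero]
  intro ε hε
  have hδ : 0 < ε / (2 * (K + 1)) := by positivity
  obtain ⟨N, hN⟩ := (Metric.tendsto_atTop.mp hα0 (ε / (2 * (K + 1))) hδ)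
  set δ := ε / (2 * (K + 1)) with hδdef
  set C' := C + K * ∑ j ∈ Finset.range N, α j ^ 2 with hC'def
  have hC' : 0 ≤ C' := by positivity
  have hKδ : K * δ ≤ ε / 2 := by
    rw [hδdef, mul_div_assoc', div_le_div_iff₀ (by positivity) (by norm_num)]
    nlinarith
  have hkey : ∀ m, u m ≤ C' + (ε / 2) * ∑ j ∈ Finset.range m, α j := by
    intro m
    have hptw : ∀ j ∈ Finset.range m, α j ^ 2 ≤ (if j ∈ Finset.range N then α j ^ 2 else 0) + δ * α j := by
      intro j _
      by_cases hj : j ∈ Finset.range N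
      · simp only [hj, if_true]
        nlinarith [hα j, hδ.le]
      · simp only [hj, if_false, zero_add]
        have hjN : N ≤ j := by
          by_contra h
          exact hj (Finset.mem_range.mpr (not_le.mp h))
        have := hN j hjN
        rw [Real.dist_eq, sub_zero, abs_of_nonneg (hα j)] at this
        nlinarith [hα j]
    have hsum : ∑ j ∈ Finset.range m, α j ^ 2 ≤
        (∑ j ∈ Finset.range N, α j ^ 2) + δ * ∑ j ∈ Finset.range m, α j := by
      calc ∑ j ∈ Finset.range m, α j ^ 2
          ≤ ∑ j ∈ Finset.range m, ((if j ∈ Finset.range N then α j ^ 2 else 0) + δ * α j) :=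
            Finset.sum_le_sum hptw
        _ = (∑ j ∈ Finset.range m, if j ∈ Finset.range N then α j ^ 2 else 0)
            + δ * ∑ j ∈ Finset.range m, α j := by
            rw [Finset.sum_add_distrib, Finset.mul_sum]
        _ ≤ (∑ j ∈ Finset.range N, α j ^ 2) + δ * ∑ j ∈ Finset.range m, α j := by
            gcongr
            rw [Finset.sum_ite_mem]
            exact Finset.sum_le_sum_of_subset_of_nonneg Finset.inter_subset_right
              (fun j _ _ => sq_nonneg _)
    have hS : 0 ≤ ∑ j ∈ Finset.range m, α j := Finset.sum_nonneg fun j _ => hα j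
    calc u m ≤ C + K * ∑ j ∈ Finset.range m, α j ^ 2 := hub m
      _ ≤ C + K * ((∑ j ∈ Finset.range N, α j ^ 2) + δ * ∑ j ∈ Finset.range m, α j) := by
          gcongr
      _ = C' + (K * δ) * ∑ j ∈ Finset.range m, α j := by rw [hC'def]; ring
      _ ≤ C' + (ε / 2) * ∑ j ∈ Finset.range m, α j := by nlinarith
  have hev : ∀ᶠ m in atTop, max 1 (2 * (C' + 1) / ε) ≤ ∑ j ∈ Finset.range m, α j :=
    hdiv.eventually_ge_atTop _
  filter_upwards [hev] with m hm
  set S := ∑ j ∈ Finset.range m, α j with hSdef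
  have hS1 : (1:ℝ) ≤ S := le_trans (le_max_left _ _) hm
  have hS2 : 2 * (C' + 1) / ε ≤ S := le_trans (le_max_right _ _) hm
  have hSpos : 0 < S := by linarith
  have hεS : 2 * (C' + 1) ≤ ε * S := by
    rw [div_le_iff₀ hε] at hS2
    linarith
  rw [Real.norm_eq_abs, abs_of_nonneg (div_nonneg (hu m) hSpos.le), div_lt_iff₀ hSpos]
  have := hkey m
  nlinarith


/-- time-averaged SGD. Under the SGD setup with nonincreasing steps,
`0 ≤ α_m ≤ 1/L`, `∑ α_m = ∞`, `α_m → 0`, and `E[f(w_0)] < ∞` (sequences indexed from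
`0`), the step-size-weighted averages of the expected squared gradients tend to zero:
`(∑_{j≤m} α_j E[‖∇f(w_j)‖²]) / (∑_{j≤m} α_j) → 0`; equivalently, the time-averaged
iterate `z_m` (taking value `w_j` with probability `α_j/∑_{i≤m} α_i`) satisfies
`E[‖∇f(z_m)‖²] → 0`. -/
theorem stmt12 {d : ℕ} (f : EuclideanSpace ℝ (Fin d) → ℝ) (L σ : ℝ)
        (hf : ContDiff ℝ 2 f) (hf0 : ∀ x, 0 ≤ f x)
        (hHess : ∀ x, ‖fderiv ℝ (gradient f) x‖ ≤ L) (hL : 0 < L)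
        {Ω : Type*} [inst : MeasurableSpace Ω] (μ : Measure Ω) [IsProbabilityMeasure μ]
        (𝓕 : ℕ → MeasurableSpace Ω) (h𝓕 : ∀ m, 𝓕 m ≤ inst)
        (w g : ℕ → Ω → EuclideanSpace ℝ (Fin d)) (α : ℕ → ℝ)
        (hw : ∀ m, StronglyMeasurable[𝓕 m] (w m))
        (hg : ∀ m, AEStronglyMeasurable (g m) μ)
        (hiter : ∀ m, ∀ ω, w (m + 1) ω = w m ω - α m • g m ω)
        (hunbiased : ∀ m, μ[g m | 𝓕 m] =ᵐ[μ] fun ω => gradient f (w m ω))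
        (hg2 : ∀ m, Integrable (fun ω => ‖g m ω‖ ^ 2) μ)
        (hvar : ∀ m, ∫ ω, (‖g m ω‖ ^ 2 - ‖gradient f (w m ω)‖ ^ 2) ∂μ ≤ σ ^ 2)
        (hα : ∀ m, 0 ≤ α m) (hαL : ∀ m, α m ≤ 1 / L)
    (hmono : Antitone α)
    (hdiv : Tendsto (fun M => ∑ m ∈ Finset.range M, α m) atTop atTop)
    (hα0 : Tendsto α atTop (nhds 0))
    (hint : Integrable (fun ω => f (w 0 ω)) μ) :
    Tendsto
      (fun m => (∑ j ∈ Finset.range (m + 1), α j * ∫ ω, ‖gradient f (w j ω)‖ ^ 2 ∂μ) /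
        ∑ j ∈ Finset.range (m + 1), α j) atTop (nhds 0) := by
  have hwm : ∀ m, StronglyMeasurable (w m) := fun m => (hw m).mono (h𝓕 m)
  have hgradcont : Continuous (gradient f) := by
    have h : gradient f = fun y => (toDual ℝ _).symm (fderiv ℝ f y) := rfl
    rw [h]
    exact (toDual ℝ _).symm.continuous.comp (hf.fderiv_right (m := 1) (by norm_num)).continuous
  have hXm : ∀ m, AEStronglyMeasurable (fun ω => gradient f (w m ω)) μ := fun m =>
    (hgradcont.comp_stronglyMeasurable (hwm m)).aestronglyMeasurable
  have hfacts : ∀ m, MemLp (fun ω => gradient f (w m ω)) 2 μ ∧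
      ∫ ω, ⟪gradient f (w m ω), g m ω⟫ ∂μ = ∫ ω, ‖gradient f (w m ω)‖ ^ 2 ∂μ :=
    fun m => sgd_condexp_facts (h𝓕 m) (hg m) (hg2 m) (hunbiased m)
  have hX2 : ∀ m, Integrable (fun ω => ‖gradient f (w m ω)‖ ^ 2) μ := fun m =>
    (memLp_two_iff_integrable_sq_norm (hXm m)).1 (hfacts m).1
  have hGnn : ∀ m, 0 ≤ ∫ ω, ‖gradient f (w m ω)‖ ^ 2 ∂μ := fun m =>
    integral_nonneg fun ω => sq_nonneg _
  have hFnn : ∀ m, 0 ≤ ∫ ω, f (w m ω) ∂μ := fun m => integral_nonneg fun ω => hf0 _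
  have hinner : ∀ m, Integrable (fun ω => ⟪gradient f (w m ω), g m ω⟫) μ := by
    intro m
    refine Integrable.mono' (((hX2 m).add (hg2 m)).const_mul (1/2 : ℝ))
      ((hXm m).inner (hg m)) ?_
    filter_upwards with ω
    simp only [Pi.add_apply]
    rw [Real.norm_eq_abs]
    have h1 := abs_real_inner_le_norm (gradient f (w m ω)) (g m ω)
    nlinarith [sq_nonneg (‖gradient f (w m ω)‖ - ‖g m ω‖), norm_nonneg (gradient f (w m ω)),
      norm_nonneg (g m ω)]
  have hpt : ∀ m ω, f (w (m+1) ω) ≤ f (w m ω) - α m * ⟪gradient f (w m ω), g m ω⟫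
      + L / 2 * (α m ^ 2 * ‖g m ω‖ ^ 2) := by
    intro m ω
    have h := sgd_descent f L hf hHess hL.le (w m ω) (-(α m • g m ω))
    rw [hiter m ω, sub_eq_add_neg]
    refine le_trans h (le_of_eq ?_)
    rw [inner_neg_right, real_inner_smul_right, norm_neg, norm_smul, Real.norm_eq_abs,
      mul_pow, sq_abs]
    ring
  have hfint : ∀ m, Integrable (fun ω => f (w m ω)) μ := by
    intro m
    induction m with
    | zero => exact hint
    | succ n ih =>
      refine Integrable.mono'
        ((ih.add ((hinner n).abs.const_mul (α n))).add ((hg2 n).const_mul (L / 2 * α n ^ 2)))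
        (hf.continuous.comp_stronglyMeasurable (hwm (n+1))).aestronglyMeasurable ?_
      filter_upwards with ω
      rw [Real.norm_eq_abs, abs_of_nonneg (hf0 _)]
      have h1 := hpt n ω
      have h2 : α n * (-⟪gradient f (w n ω), g n ω⟫) ≤ α n * |⟪gradient f (w n ω), g n ω⟫| :=
        mul_le_mul_of_nonneg_left (neg_le_abs _) (hα n)
      simp only [Pi.add_apply]
      nlinarith
  have hEg2 : ∀ m, ∫ ω, ‖g m ω‖ ^ 2 ∂μ ≤ (∫ ω, ‖gradient f (w m ω)‖ ^ 2 ∂μ) + σ ^ 2 := by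
    intro m
    have h := hvar m
    rw [integral_sub (hg2 m) (hX2 m)] at h
    linarith
  have hstep : ∀ m, α m * ∫ ω, ‖gradient f (w m ω)‖ ^ 2 ∂μ ≤
      2 * ((∫ ω, f (w m ω) ∂μ) - ∫ ω, f (w (m+1) ω) ∂μ) + L * σ ^ 2 * α m ^ 2 := by
    intro m
    have hαL1 : α m * L ≤ 1 := (le_div_iff₀ hL).mp (hαL m)
    have hIc : Integrable (fun ω => α m * ⟪gradient f (w m ω), g m ω⟫) μ :=
      (hinner m).const_mul (α m)
    have hI1 : Integrable (fun ω => f (w m ω) - α m * ⟪gradient f (w m ω), g m ω⟫) μ :=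
      (hfint m).sub hIc
    have hI2 : Integrable (fun ω => L / 2 * (α m ^ 2 * ‖g m ω‖ ^ 2)) μ :=
      ((hg2 m).const_mul (α m ^ 2)).const_mul (L / 2)
    have hint1 : ∫ ω, f (w (m+1) ω) ∂μ ≤ ∫ ω, (f (w m ω)
        - α m * ⟪gradient f (w m ω), g m ω⟫ + L / 2 * (α m ^ 2 * ‖g m ω‖ ^ 2)) ∂μ := by
      refine integral_mono (hfint (m+1)) (hI1.add hI2) (hpt m)
    rw [integral_add hI1 hI2, integral_sub (hfint m) hIc,
      integral_const_mul, integral_const_mul, integral_const_mul, (hfacts m).2] at hint1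
    have hB0 : 0 ≤ ∫ ω, ‖g m ω‖ ^ 2 ∂μ := integral_nonneg fun ω => sq_nonneg _
    have h6 : 0 ≤ (1 - α m * L) * (α m * ∫ ω, ‖gradient f (w m ω)‖ ^ 2 ∂μ) :=
      mul_nonneg (by linarith) (mul_nonneg (hα m) (hGnn m))
    have h7 := hEg2 m
    nlinarith [mul_nonneg (mul_nonneg hL.le (sq_nonneg (α m))) hB0,
      mul_le_mul_of_nonneg_left h7 (mul_nonneg (by positivity : (0:ℝ) ≤ L / 2) (sq_nonneg (α m)))]
  have htel : ∀ n, ∑ j ∈ Finset.range n, α j * ∫ ω, ‖gradient f (w j ω)‖ ^ 2 ∂μ ≤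
      2 * (∫ ω, f (w 0 ω) ∂μ) - 2 * (∫ ω, f (w n ω) ∂μ)
        + L * σ ^ 2 * ∑ j ∈ Finset.range n, α j ^ 2 := by
    intro n
    induction n with
    | zero => simp
    | succ k ih =>
      rw [Finset.sum_range_succ, Finset.sum_range_succ]
      have h := hstep k
      nlinarith
  have hub : ∀ n, ∑ j ∈ Finset.range n, α j * ∫ ω, ‖gradient f (w j ω)‖ ^ 2 ∂μ ≤
      2 * (∫ ω, f (w 0 ω) ∂μ) + L * σ ^ 2 * ∑ j ∈ Finset.range n, α j ^ 2 := by
    intro n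
    have h1 := htel n
    have h2 := hFnn n
    linarith
  have hlim := sgd_ratio_lim (2 * ∫ ω, f (w 0 ω) ∂μ) (L * σ ^ 2)
    (by linarith [hFnn 0]) (mul_nonneg hL.le (sq_nonneg σ)) α
    (fun n => ∑ j ∈ Finset.range n, α j * ∫ ω, ‖gradient f (w j ω)‖ ^ 2 ∂μ)
    hα hdiv hα0
    (fun n => Finset.sum_nonneg fun j _ => mul_nonneg (hα j) (hGnn j)) hub
  exact hlim.comp (tendsto_add_atTop_nat 1)

end SGDHelpers
end
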